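/- Let d ≤ e < f be integers with d + e + f = 0, and assume k ≤ e. Suppose val(β) = d, k > d, j + k > d + e, val(α·ε^k) = d + e, and val(α·γ − β·ε^j) > d + e. Then val(c) ≤ 0 if and only if e ≥ j, and when e ≥ j one has val(c) = j − e. -/

import Mathlib

noncomputable section

/-- The ε-adic valuation on `L = k̄((ε))`, with `val 0 = ∞`. -/
def val {K : Type*} [Field K] (x : LaurentSeries K) : WithTop ℤ := x.orderTop

/-- The uniformizer ε of the Laurent series field. -/
def eps (K : Type*) [Field K] : LaurentSeries K := HahnSeries.single 1 1

/-- `σ : L → L` is the Frobenius automorphism: it fixes ε and raises each Laurent-series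
coefficient to the `q`-th power.  (This property determines `σ` uniquely.) -/
def IsFrobenius (K : Type*) [Field K] (q : ℕ)
    (σ : LaurentSeries K → LaurentSeries K) : Prop :=
  ∀ (x : LaurentSeries K) (n : ℤ), (σ x).coeff n = (x.coeff n) ^ q

/-! σ preserves valuations and `k < j`, so `val γ = k + val c`, hence `val (α γ) = d + e + val c`,
while `val (β ε^j) = d + j`. Since `val (α γ - β ε^j) > d + e`, the ultrametric inequality leaves
two possibilities: the two valuations agree, i.e. `val c = j - e`; or both exceed `d + e`, i.e.
`val c > 0` and `j > e`. -/

open HahnSeries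

section Valuation

variable {K : Type*} [Field K]

lemma val_mul (x y : LaurentSeries K) : val (x * y) = val x + val y :=
  orderTop_mul x y

lemma val_neg (x : LaurentSeries K) : val (-x) = val x :=
  orderTop_neg

lemma val_eps_zpow (n : ℤ) : val (eps K ^ n) = n := by
  rw [val, eps, ← RatFunc.single_zpow, orderTop_single one_ne_zero]

lemma val_eq_of_coeff_eq_zero_iff {x y : LaurentSeries K}
    (h : ∀ n, x.coeff n = 0 ↔ y.coeff n = 0) : val x = val y :=
  le_antisymm
    (le_orderTop_iff_forall.2 fun n hn => (h n).1 (coeff_eq_zero_of_lt_orderTop hn))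
    (le_orderTop_iff_forall.2 fun n hn => (h n).2 (coeff_eq_zero_of_lt_orderTop hn))

lemma IsFrobenius.val_apply {q : ℕ} (hq : q ≠ 0) {σ : LaurentSeries K → LaurentSeries K}
    (hσ : IsFrobenius K q σ) (x : LaurentSeries K) : val (σ x) = val x :=
  val_eq_of_coeff_eq_zero_iff fun n => by rw [hσ x n, pow_eq_zero_iff hq]

lemma val_eps_zpow_mul_sub_eps_zpow_mul {σ : LaurentSeries K → LaurentSeries K}
    (hσ : ∀ x, val (σ x) = val x) {j k : ℤ} (hkj : k < j) (c : LaurentSeries K) :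
    val (eps K ^ j * σ c - eps K ^ k * c) = k + val c := by
  rcases eq_or_ne c 0 with rfl | hc
  · have hσ0 : σ 0 = 0 := orderTop_eq_top.1 ((hσ 0).trans orderTop_zero)
    simp [hσ0, val]
  obtain ⟨v, hv⟩ := WithTop.ne_top_iff_exists.1 (orderTop_ne_top.2 hc)
  have hlt : val (eps K ^ k * c) < val (eps K ^ j * σ c) := by
    rw [val_mul, val_mul, hσ, val_eps_zpow, val_eps_zpow, val, ← hv]
    exact_mod_cast add_lt_add_left hkj v
  rw [← neg_sub, val_neg, val, orderTop_sub hlt, ← val, val_mul, val_eps_zpow]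

lemma val_eq_or_lt_of_lt_val_sub {x y : LaurentSeries K} {n : WithTop ℤ}
    (h : n < val (x - y)) : val x = val y ∨ n < val x ∧ n < val y := by
  rcases lt_trichotomy (val x) (val y) with hxy | hxy | hxy
  · rw [val, orderTop_sub hxy] at h
    exact Or.inr ⟨h, h.trans hxy⟩
  · exact Or.inl hxy
  · rw [← neg_sub, val_neg, val, orderTop_sub hxy] at h
    exact Or.inr ⟨h.trans hxy, h⟩

end Valuation

theorem case_d_min_k_le_e_val_c_general (F : Type*) [Field F] [Fintype F]
    (σ : LaurentSeries (AlgebraicClosure F) → LaurentSeries (AlgebraicClosure F))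
    (hσ : IsFrobenius (AlgebraicClosure F) (Fintype.card F) σ)
    (c : LaurentSeries (AlgebraicClosure F))
    (j k : ℤ) (hjk : k < j)
    (d e : ℤ)
    (α β γ : LaurentSeries (AlgebraicClosure F))
    (hγ : γ = eps (AlgebraicClosure F) ^ j * σ c - eps (AlgebraicClosure F) ^ k * c)
    (hvβ : val β = (d : WithTop ℤ))
    (hvα : val (α * eps (AlgebraicClosure F) ^ k) = ((d + e : ℤ) : WithTop ℤ))
    (hminor : ((d + e : ℤ) : WithTop ℤ) < val (α * γ - β * eps (AlgebraicClosure F) ^ j)) :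
    (val c ≤ (0 : WithTop ℤ) ↔ j ≤ e) ∧
    (j ≤ e → val c = ((j - e : ℤ) : WithTop ℤ)) := by
  set n : WithTop ℤ := ((d + e : ℤ) : WithTop ℤ)
  have hn : n ≠ ⊤ := WithTop.coe_ne_top
  have hσv := hσ.val_apply Fintype.card_ne_zero
  have hαγ : val (α * γ) = n + val c := by
    rw [val_mul, hγ, val_eps_zpow_mul_sub_eps_zpow_mul hσv hjk, ← add_assoc,
      ← val_eps_zpow (K := AlgebraicClosure F) k, ← val_mul, hvα]
  have hβε : val (β * eps (AlgebraicClosure F) ^ j) = n + ((j - e : ℤ) : WithTop ℤ) := by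
    rw [val_mul, hvβ, val_eps_zpow, ← WithTop.coe_add, ← WithTop.coe_add]
    congr 1
    ring
  rcases val_eq_or_lt_of_lt_val_sub hminor with heq | ⟨hlt_αγ, hlt_βε⟩
  · rw [hαγ, hβε, WithTop.add_left_inj hn] at heq
    rw [heq]
    exact ⟨by norm_cast; omega, fun _ => rfl⟩
  · have hpos : 0 < val c :=
      (WithTop.add_lt_add_iff_left hn).1 (by rw [add_zero, ← hαγ]; exact hlt_αγ)
    have hej : (0 : WithTop ℤ) < ((j - e : ℤ) : WithTop ℤ) :=
      (WithTop.add_lt_add_iff_left hn).1 (by rw [add_zero, ← hβε]; exact hlt_βε)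
    norm_cast at hej
    exact ⟨iff_of_false hpos.not_ge (by omega), fun _ => by omega⟩

/-- the case `k ≤ e` for `x = ε^{(d,e,f)}s_2s_1`, `d ≤ e < f`: under the
stated valuation conditions, `val(c) ≤ 0` iff `e ≥ j`, and when `e ≥ j` one has
`val(c) = j − e`. -/
theorem case_d_min_k_le_e_val_c (F : Type*) [Field F] [Fintype F]
    (σ : LaurentSeries (AlgebraicClosure F) → LaurentSeries (AlgebraicClosure F))
    (hσ : IsFrobenius (AlgebraicClosure F) (Fintype.card F) σ)
    (a b c : LaurentSeries (AlgebraicClosure F))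
    (i j k : ℤ) (hij : j < i) (hjk : k < j) (hijk : i + j + k = 0)
    (d e f : ℤ) (hde : d ≤ e) (hef : e < f) (hdef : d + e + f = 0)
    (hke : k ≤ e)
    (α β γ : LaurentSeries (AlgebraicClosure F))
    (hα : α = eps (AlgebraicClosure F) ^ i * σ a - eps (AlgebraicClosure F) ^ j * a)
    (hβ : β = eps (AlgebraicClosure F) ^ i * σ b - eps (AlgebraicClosure F) ^ k * b -
      a * (eps (AlgebraicClosure F) ^ j * σ c - eps (AlgebraicClosure F) ^ k * c))
    (hγ : γ = eps (AlgebraicClosure F) ^ j * σ c - eps (AlgebraicClosure F) ^ k * c)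
    (hvβ : val β = (d : WithTop ℤ))
    (hkd : d < k)
    (hjkde : d + e < j + k)
    (hvα : val (α * eps (AlgebraicClosure F) ^ k) = ((d + e : ℤ) : WithTop ℤ))
    (hminor : ((d + e : ℤ) : WithTop ℤ) < val (α * γ - β * eps (AlgebraicClosure F) ^ j)) :
    (val c ≤ (0 : WithTop ℤ) ↔ j ≤ e) ∧
    (j ≤ e → val c = ((j - e : ℤ) : WithTop ℤ)) :=
  case_d_min_k_le_e_val_c_general F σ hσ c j k hjk d e α β γ hγ hvβ hvα hminor
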